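/- If G is a tree with at least two vertices, then b(G) ≤ 2. -/
import Mathlib


open SimpleGraph

section Defs
variable {V : Type*}

/-- `S` is a dominating set of `G`. -/
def Dominates (G : SimpleGraph V) (S : Set V) : Prop :=
  ∀ v : V, v ∈ S ∨ ∃ u ∈ S, G.Adj u v

/-- The domination number `γ(G)`. -/
noncomputable def domNum (G : SimpleGraph V) [Fintype V] : ℕ :=
  sInf {n | ∃ S : Finset V, S.card = n ∧ Dominates G ↑S}

/-- The bondage number `b(G)`. -/
noncomputable def bondageNum (G : SimpleGraph V) [Fintype V] : ℕ :=
  sInf {n | ∃ A : Finset (Sym2 V), ↑A ⊆ G.edgeSet ∧ A.card = n ∧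
    domNum (G.deleteEdges ↑A) = domNum G + 1}

/-- The clique number `ω(G)`. -/
noncomputable def cliqueNum' (G : SimpleGraph V) [Fintype V] : ℕ :=
  sSup {n | ∃ s : Finset V, G.IsNClique n s}

/-- The degree of a vertex. -/
noncomputable def vdeg (G : SimpleGraph V) (v : V) : ℕ := (G.neighborSet v).ncard

/-- The maximum degree `Δ(G)`. -/
noncomputable def maxDeg (G : SimpleGraph V) [Fintype V] : ℕ :=
  sSup {d | ∃ v, vdeg G v = d}

/-- A chordal graph: no induced cycle of length at least 4. -/
def Chordal (G : SimpleGraph V) : Prop :=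
  ∀ n, 4 ≤ n → IsEmpty (cycleGraph n ↪g G)

/-- The corona `G ∘ K₁`: attach a pendant vertex to each vertex of `G`. -/
def coronaK1 (G : SimpleGraph V) : SimpleGraph (V ⊕ V) :=
  SimpleGraph.fromRel (fun a b =>
    (∃ u v, a = Sum.inl u ∧ b = Sum.inl v ∧ G.Adj u v) ∨
    (∃ u, a = Sum.inl u ∧ b = Sum.inr u))

end Defs

section Aux
set_option linter.unusedSectionVars false
variable {V : Type*} {G : SimpleGraph V}


lemma exists_path_avoid (hconn : G.Connected) {r x z : V} (hzx : z ≠ x)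
    (hd : G.dist r x ≤ G.dist r z) :
    ∃ p : G.Walk r x, p.IsPath ∧ z ∉ p.support := by
  classical
  obtain ⟨p0, hp0⟩ := (hconn r x).exists_walk_length_eq_dist
  refine ⟨p0.bypass, p0.bypass_isPath, ?_⟩
  intro hz
  have hlen : p0.bypass.length = G.dist r x :=
    le_antisymm (hp0 ▸ p0.length_bypass_le) (dist_le _)
  have hspec := p0.bypass.take_spec hz
  have hlens : (p0.bypass.takeUntil z hz).length + (p0.bypass.dropUntil z hz).length
      = p0.bypass.length := by
    rw [← Walk.length_append, hspec]
  have h1 : G.dist r z ≤ (p0.bypass.takeUntil z hz).length := dist_le _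
  have h2 : 1 ≤ (p0.bypass.dropUntil z hz).length := by
    by_contra h
    exact hzx (Walk.eq_of_length_eq_zero (p := p0.bypass.dropUntil z hz) (by omega))
  omega

lemma acyclic_no_two (hacyc : G.IsAcyclic) {r x y1 y2 : V} (hne : y1 ≠ y2)
    (h1 : G.Adj y1 x) (h2 : G.Adj y2 x) (p1 : G.Walk r y1) (p2 : G.Walk r y2)
    (hp1 : p1.IsPath) (hp2 : p2.IsPath) (hx1 : x ∉ p1.support) (hx2 : x ∉ p2.support) :
    False := by
  have hq1 : (Walk.cons h1.symm p1.reverse).IsPath := by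
    rw [Walk.cons_isPath_iff]
    exact ⟨hp1.reverse, by simpa using hx1⟩
  have hq2 : (Walk.cons h2.symm p2.reverse).IsPath := by
    rw [Walk.cons_isPath_iff]
    exact ⟨hp2.reverse, by simpa using hx2⟩
  have := isAcyclic_iff_path_unique.1 hacyc ⟨_, hq1⟩ ⟨_, hq2⟩
  have hw : (Walk.cons h1.symm p1.reverse) = (Walk.cons h2.symm p2.reverse) :=
    congrArg Subtype.val this
  have hs := congrArg Walk.support hw
  rw [Walk.support_cons, Walk.support_cons, p1.reverse.support_eq_cons,
    p2.reverse.support_eq_cons] at hs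
  simp at hs
  exact hne hs.1

lemma exists_parent (hconn : G.Connected) {r x : V} (hx : x ≠ r) :
    ∃ y, G.Adj y x ∧ G.dist r y + 1 = G.dist r x := by
  obtain ⟨p, hp⟩ := (hconn r x).exists_walk_length_eq_dist
  obtain ⟨y, h, q, hq⟩ := Walk.exists_eq_cons_of_ne hx p.reverse
  refine ⟨y, h.symm, ?_⟩
  have hd1 : G.dist r y ≤ q.reverse.length := dist_le _
  have hlq : q.length = p.length - 1 := by
    have := congrArg Walk.length hq
    simp at this; omega
  have hdp : 1 ≤ G.dist r x := by
    rw [Nat.one_le_iff_ne_zero, Ne, hconn.dist_eq_zero_iff]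
    exact Ne.symm hx
  have htri : G.dist r x ≤ G.dist r y + G.dist y x := hconn.dist_triangle
  have : G.dist y x ≤ 1 := dist_le (Walk.cons h.symm Walk.nil)
  simp at hd1
  omega

lemma tree_struct [Fintype V] (hconn : G.Connected) (hacyc : G.IsAcyclic)
    (h2 : 2 ≤ Fintype.card V) :
    ∃ u v : V, G.Adj u v ∧ (∀ y, G.Adj v y → y = u) ∧
      ((∃ v2, v2 ≠ v ∧ G.Adj u v2 ∧ ∀ y, G.Adj v2 y → y = u)
       ∨ (∃ w, w ≠ v ∧ G.Adj u w ∧ ∀ y, G.Adj u y → y = v ∨ y = w)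
       ∨ (∀ y, G.Adj u y → y = v)) := by
  classical
  obtain ⟨r, b, hab⟩ := Fintype.exists_pair_of_one_lt_card (α := V) (by omega)
  obtain ⟨v, -, hmax'⟩ := Finset.exists_max_image Finset.univ (G.dist r)
    ⟨r, Finset.mem_univ r⟩
  have hmax : ∀ x, G.dist r x ≤ G.dist r v := fun x => hmax' x (Finset.mem_univ x)
  set d := G.dist r v with hd
  have hdb : 1 ≤ G.dist r b := by
    rw [Nat.one_le_iff_ne_zero, Ne, hconn.dist_eq_zero_iff]
    exact hab
  have hd1 : 1 ≤ d := le_trans hdb (hmax b)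
  have hvr : v ≠ r := by
    intro h
    rw [hd, h, SimpleGraph.dist_self] at hd1
    omega
  obtain ⟨u, hu_adj, hu_dist⟩ := exists_parent hconn hvr
  -- any neighbor of u at max distance is a leaf
  have key : ∀ x, G.Adj u x → G.dist r x = d → (∀ y, G.Adj x y → y = u) := by
    intro x hux hdx y hxy
    by_contra hne
    obtain ⟨p1, hp1, hxp1⟩ := exists_path_avoid hconn (r := r) (z := x) (x := y) hxy.ne
      (le_trans (hmax y) (by omega))
    obtain ⟨p2, hp2, hxp2⟩ := exists_path_avoid hconn (r := r) (z := x) (x := u) hux.ne'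
      (by omega)
    exact acyclic_no_two hacyc hne hxy.symm hux p1 p2 hp1 hp2 hxp1 hxp2
  have leaf_v : ∀ y, G.Adj v y → y = u := key v hu_adj rfl
  refine ⟨u, v, hu_adj, leaf_v, ?_⟩
  by_cases hex : ∃ x, G.Adj u x ∧ x ≠ v ∧ G.dist r x = d
  · obtain ⟨x, hux, hxv, hdx⟩ := hex
    exact Or.inl ⟨x, hxv, hux, key x hux hdx⟩
  · push_neg at hex
    by_cases hur : u = r
    · refine Or.inr (Or.inr ?_)
      intro y hy
      by_contra hne
      refine hex y hy hne ?_
      have h1 : 1 ≤ G.dist r y := by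
        rw [Nat.one_le_iff_ne_zero, Ne, hconn.dist_eq_zero_iff]
        exact fun h => G.irrefl (h ▸ hur ▸ hy)
      have := hmax y
      have hdu : G.dist r u = 0 := by rw [hur]; simp
      omega
    · obtain ⟨w, hw_adj, hw_dist⟩ := exists_parent hconn hur
      refine Or.inr (Or.inl ⟨w, ?_, hw_adj.symm, ?_⟩)
      · intro h; rw [h] at hw_dist; omega
      · intro y hy
        by_contra hne
        push_neg at hne
        have hdy : G.dist r y ≤ G.dist r u := by
          have := hex y hy hne.1
          have := hmax y
          omega
        obtain ⟨p1, hp1, hup1⟩ := exists_path_avoid hconn (r := r) (z := u) (x := y) hy.ne hdy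
        obtain ⟨p2, hp2, hup2⟩ := exists_path_avoid hconn (r := r) (z := u) (x := w) hw_adj.ne'
          (by omega)
        exact acyclic_no_two hacyc hne.2 hy.symm hw_adj p1 p2 hp1 hp2 hup1 hup2

variable [Fintype V]


lemma domNum_le {S : Finset V} (h : Dominates G ↑S) : domNum G ≤ S.card :=
  Nat.sInf_le ⟨S, rfl, h⟩

lemma exists_min_dom (G : SimpleGraph V) [Fintype V] :
    ∃ S : Finset V, S.card = domNum G ∧ Dominates G ↑S := by
  have hne : {n | ∃ S : Finset V, S.card = n ∧ Dominates G ↑S}.Nonempty :=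
    ⟨_, Finset.univ, rfl, fun v => Or.inl (Finset.mem_coe.2 (Finset.mem_univ v))⟩
  exact Nat.sInf_mem hne

lemma domNum_mono {G' : SimpleGraph V} (h : G ≤ G') : domNum G' ≤ domNum G := by
  obtain ⟨S, hc, hd⟩ := exists_min_dom G
  calc domNum G' ≤ S.card := domNum_le (fun v => (hd v).imp id (fun ⟨u, hu, ha⟩ => ⟨u, hu, h ha⟩))
    _ = domNum G := hc

section Pendant
variable {u v : V} (huv : G.Adj u v) (leaf_v : ∀ y, G.Adj v y → y = u)

include huv leaf_v

/-- there is a minimum dominating set avoiding the leaf `v`. -/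
lemma exists_min_dom_avoid : ∃ D : Finset V, D.card ≤ domNum G ∧ Dominates G ↑D ∧ v ∉ D := by
  classical
  obtain ⟨D, hc, hd⟩ := exists_min_dom G
  by_cases hv : v ∈ D
  · refine ⟨insert u (D.erase v), ?_, ?_, ?_⟩
    · calc (insert u (D.erase v)).card ≤ (D.erase v).card + 1 := Finset.card_insert_le _ _
        _ ≤ D.card := by
            have h1 : 0 < D.card := Finset.card_pos.2 ⟨v, hv⟩
            rw [Finset.card_erase_of_mem hv]; omega
        _ = domNum G := hc
    · intro x
      rcases hd x with hx | ⟨y, hy, hadj⟩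
      · by_cases hxv : x = v
        · exact Or.inr ⟨u, by simp, hxv ▸ huv⟩
        · exact Or.inl (by simp [Finset.mem_insert, Finset.mem_erase, hxv]; tauto)
      · by_cases hyv : y = v
        · have : x = u := leaf_v x (hyv ▸ hadj)
          exact Or.inl (by simp [this])
        · exact Or.inr ⟨y, by simp [Finset.mem_insert, Finset.mem_erase, hyv]; tauto, hadj⟩
    · simp [Finset.mem_insert, huv.ne']
  · exact ⟨D, le_of_eq hc, hd, hv⟩

/-- deleting a pendant edge increases the domination number by at most one. -/
lemma pend_le : domNum (G.deleteEdges {s(u,v)}) ≤ domNum G + 1 := by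
  classical
  obtain ⟨D, hc, hd, hv⟩ := exists_min_dom_avoid huv leaf_v
  have : Dominates (G.deleteEdges {s(u,v)}) ↑(insert v D) := by
    intro x
    by_cases hxv : x = v
    · exact Or.inl (by simp [hxv])
    rcases hd x with hx | ⟨y, hy, hadj⟩
    · exact Or.inl (by simp [hx])
    · refine Or.inr ⟨y, by simp [hy], ?_⟩
      rw [deleteEdges_adj]
      refine ⟨hadj, ?_⟩
      have hyv : y ≠ v := fun h => hv (h ▸ hy)
      simp only [Set.mem_singleton_iff, Sym2.eq_iff]
      push_neg
      exact ⟨fun _ h => hxv h, fun h => absurd h hyv⟩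
  calc domNum (G.deleteEdges {s(u,v)}) ≤ (insert v D).card := domNum_le this
    _ ≤ D.card + 1 := Finset.card_insert_le _ _
    _ ≤ domNum G + 1 := by omega

/-- the leaf `v` is isolated after deleting the pendant edge. -/
lemma leaf_isolated {s : Set (Sym2 V)} (hs : s(u,v) ∈ s) : ∀ y, ¬ (G.deleteEdges s).Adj y v := by
  intro y hy
  rw [deleteEdges_adj] at hy
  have : y = u := leaf_v y hy.1.symm
  subst this
  exact hy.2 (by rwa [Sym2.eq_swap] at hs ⊢)
end Pendant

section Lower
variable {u v : V}

lemma dom_mem_of_isolated {H : SimpleGraph V} {S : Finset V} (hiso : ∀ y, ¬ H.Adj y v)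
    (hS : Dominates H ↑S) : v ∈ S := by
  rcases hS v with h | ⟨y, hy, hadj⟩
  · exact h
  · exact absurd hadj (hiso y)

lemma erase_leaf_dominates [DecidableEq V] {s : Set (Sym2 V)} {S : Finset V}
    (hiso : ∀ y, ¬ (G.deleteEdges s).Adj y v) (huv : G.Adj u v)
    (hS : Dominates (G.deleteEdges s) ↑S) (huS : u ∈ S) : Dominates G ↑(S.erase v) := by
  intro x
  by_cases hxv : x = v
  · exact Or.inr ⟨u, by simp [Finset.mem_erase, huS]; exact huv.ne, hxv ▸ huv⟩
  rcases hS x with hx | ⟨y, hy, hadj⟩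
  · exact Or.inl (by simp [Finset.mem_erase, hxv, hx])
  · have hyv : y ≠ v := fun h => hiso x (h ▸ hadj).symm
    exact Or.inr ⟨y, by simp [Finset.mem_erase, hyv, hy], ((deleteEdges_adj).1 hadj).1⟩

/-- two-leaf lemma: lower bound. -/
lemma TL_ge (huv : G.Adj u v) (leaf_v : ∀ y, G.Adj v y → y = u)
    {v2 : V} (hv2 : v2 ≠ v) (huv2 : G.Adj u v2) (leaf_v2 : ∀ y, G.Adj v2 y → y = u) :
    domNum G + 1 ≤ domNum (G.deleteEdges {s(u,v)}) := by
  classical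
  obtain ⟨S, hSc, hSd⟩ := exists_min_dom (G.deleteEdges {s(u,v)})
  have hiso := leaf_isolated huv leaf_v (s := {s(u,v)}) rfl
  have hvS : v ∈ S := dom_mem_of_isolated hiso hSd
  have h0 : 0 < S.card := Finset.card_pos.2 ⟨v, hvS⟩
  by_cases huS : u ∈ S
  · have hD := erase_leaf_dominates hiso huv hSd huS
    have := domNum_le hD
    rw [Finset.card_erase_of_mem hvS] at this
    omega
  · have hv2S : v2 ∈ S := by
      rcases hSd v2 with h | ⟨y, hy, hadj⟩
      · exact h
      · have : y = u := leaf_v2 y ((deleteEdges_adj.1 hadj).1.symm)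
        exact absurd (this ▸ hy) huS
    set D := insert u ((S.erase v).erase v2) with hDdef
    have hDdom : Dominates G ↑D := by
      intro x
      by_cases hxu : x = u
      · exact Or.inl (by simp [hDdef, hxu])
      by_cases hxv : x = v
      · exact Or.inr ⟨u, by simp [hDdef], hxv ▸ huv⟩
      by_cases hxv2 : x = v2
      · exact Or.inr ⟨u, by simp [hDdef], hxv2 ▸ huv2⟩
      rcases hSd x with hx | ⟨y, hy, hadj⟩
      · exact Or.inl (by simp [hDdef, Finset.mem_erase, hxv, hxv2, hx])
      · have hyv : y ≠ v := fun h => hiso x (h ▸ hadj).symm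
        have hyv2 : y ≠ v2 := by
          intro h
          exact hxu (leaf_v2 x ((deleteEdges_adj.1 (h ▸ hadj)).1))
        exact Or.inr ⟨y, by simp [hDdef, Finset.mem_erase, hyv, hyv2, hy],
          ((deleteEdges_adj).1 hadj).1⟩
    have hcard : domNum G ≤ ((S.erase v).erase v2).card + 1 :=
      le_trans (domNum_le hDdom) (Finset.card_insert_le _ _)
    have e1 : (S.erase v).card = S.card - 1 := Finset.card_erase_of_mem hvS
    have hv2e : v2 ∈ S.erase v := Finset.mem_erase.2 ⟨hv2, hv2S⟩
    have e2 : ((S.erase v).erase v2).card = (S.erase v).card - 1 :=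
      Finset.card_erase_of_mem hv2e
    have e3 : 0 < (S.erase v).card := Finset.card_pos.2 ⟨v2, hv2e⟩
    omega

/-- single-edge lemma: lower bound. -/
lemma SE_ge (huv : G.Adj u v) (leaf_v : ∀ y, G.Adj v y → y = u)
    (leaf_u : ∀ y, G.Adj u y → y = v) :
    domNum G + 1 ≤ domNum (G.deleteEdges {s(u,v)}) := by
  classical
  obtain ⟨S, hSc, hSd⟩ := exists_min_dom (G.deleteEdges {s(u,v)})
  have hiso_v := leaf_isolated huv leaf_v (s := {s(u,v)}) rfl
  have hiso_u := leaf_isolated huv.symm leaf_u (s := {s(u,v)}) (by rw [Sym2.eq_swap]; rfl)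
  have hvS : v ∈ S := dom_mem_of_isolated hiso_v hSd
  have huS : u ∈ S := dom_mem_of_isolated hiso_u hSd
  have hD := erase_leaf_dominates hiso_v huv hSd huS
  have := domNum_le hD
  rw [Finset.card_erase_of_mem hvS] at this
  have h0 : 0 < S.card := Finset.card_pos.2 ⟨v, hvS⟩
  omega

/-- two-neighbor lemma: lower bound. -/
lemma TN_ge (huv : G.Adj u v) (leaf_v : ∀ y, G.Adj v y → y = u)
    {w : V} (hwv : w ≠ v) (huw : G.Adj u w) (hnbr : ∀ y, G.Adj u y → y = v ∨ y = w) :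
    domNum G + 1 ≤ domNum (G.deleteEdges {s(u,v), s(u,w)}) := by
  classical
  obtain ⟨S, hSc, hSd⟩ := exists_min_dom (G.deleteEdges {s(u,v), s(u,w)})
  have hiso_v := leaf_isolated huv leaf_v (s := {s(u,v), s(u,w)}) (by simp)
  have hiso_u : ∀ y, ¬ (G.deleteEdges {s(u,v), s(u,w)}).Adj y u := by
    intro y hy
    rw [deleteEdges_adj] at hy
    rcases hnbr y hy.1.symm with h | h <;> subst h <;>
      exact hy.2 (by rw [Sym2.eq_swap]; simp)
  have hvS : v ∈ S := dom_mem_of_isolated hiso_v hSd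
  have huS : u ∈ S := dom_mem_of_isolated hiso_u hSd
  have hD := erase_leaf_dominates hiso_v huv hSd huS
  have := domNum_le hD
  rw [Finset.card_erase_of_mem hvS] at this
  have h0 : 0 < S.card := Finset.card_pos.2 ⟨v, hvS⟩
  omega

/-- two-neighbor lemma: upper bound, assuming deleting the pendant edge alone
does not change the domination number. -/
lemma TN_le (huv : G.Adj u v) (leaf_v : ∀ y, G.Adj v y → y = u)
    {w : V} (hwv : w ≠ v) (huw : G.Adj u w) (hnbr : ∀ y, G.Adj u y → y = v ∨ y = w)
    (heq : domNum (G.deleteEdges {s(u,v)}) = domNum G) :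
    domNum (G.deleteEdges {s(u,v), s(u,w)}) ≤ domNum G + 1 := by
  classical
  obtain ⟨S, hSc, hSd⟩ := exists_min_dom (G.deleteEdges {s(u,v)})
  have hiso_v := leaf_isolated huv leaf_v (s := {s(u,v)}) rfl
  have hvS : v ∈ S := dom_mem_of_isolated hiso_v hSd
  by_cases huS : u ∈ S
  · have hdom : Dominates (G.deleteEdges {s(u,v), s(u,w)}) ↑(insert w S) := by
      intro x
      by_cases hxS : x ∈ S
      · exact Or.inl (by simp [hxS])
      by_cases hxw : x = w
      · exact Or.inl (by simp [hxw])
      have hxu : x ≠ u := fun h => hxS (h ▸ huS)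
      rcases hSd x with hx | ⟨y, hy, hadj⟩
      · exact absurd hx hxS
      · refine Or.inr ⟨y, by simp [hy], ?_⟩
        rw [deleteEdges_adj] at hadj ⊢
        refine ⟨hadj.1, ?_⟩
        rintro (h | h)
        · exact hadj.2 h
        · simp only [Set.mem_singleton_iff, Sym2.eq_iff] at h
          rcases h with ⟨h1, h2⟩ | ⟨h1, h2⟩
          · exact hxw h2
          · exact hxu h2
    calc domNum (G.deleteEdges {s(u,v), s(u,w)}) ≤ (insert w S).card := domNum_le hdom
      _ ≤ S.card + 1 := Finset.card_insert_le _ _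
      _ = domNum G + 1 := by rw [hSc, heq]
  · have hwS : w ∈ S := by
      rcases hSd u with h | ⟨y, hy, hadj⟩
      · exact absurd h huS
      · rcases hnbr y ((deleteEdges_adj.1 hadj).1.symm) with h | h
        · subst h
          exact absurd (by rw [Sym2.eq_swap]; rfl) ((deleteEdges_adj.1 hadj).2)
        · exact h ▸ hy
    have hdom : Dominates (G.deleteEdges {s(u,v), s(u,w)}) ↑(insert u S) := by
      intro x
      by_cases hxS : x ∈ S
      · exact Or.inl (by simp [hxS])
      by_cases hxu : x = u
      · exact Or.inl (by simp [hxu])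
      rcases hSd x with hx | ⟨y, hy, hadj⟩
      · exact absurd hx hxS
      · refine Or.inr ⟨y, by simp [hy], ?_⟩
        have hyu : y ≠ u := fun h => huS (h ▸ hy)
        rw [deleteEdges_adj] at hadj ⊢
        refine ⟨hadj.1, ?_⟩
        rintro (h | h)
        · exact hadj.2 h
        · simp only [Set.mem_singleton_iff, Sym2.eq_iff] at h
          rcases h with ⟨h1, h2⟩ | ⟨h1, h2⟩
          · exact hyu h1
          · exact hxu h2
    calc domNum (G.deleteEdges {s(u,v), s(u,w)}) ≤ (insert u S).card := domNum_le hdom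
      _ ≤ S.card + 1 := Finset.card_insert_le _ _
      _ = domNum G + 1 := by rw [hSc, heq]
end Lower

end Aux

/-- a tree with at least two vertices has bondage number at most 2. -/
theorem bondage_tree (V : Type*) [Fintype V] (G : SimpleGraph V)
    (hconn : G.Connected) (hacyc : G.IsAcyclic) (h2 : 2 ≤ Fintype.card V) :
    bondageNum G ≤ 2 := by
  classical
  obtain ⟨u, v, huv, leaf_v, hcase⟩ := tree_struct hconn hacyc h2
  have key1 : domNum (G.deleteEdges {s(u,v)}) = domNum G + 1 → bondageNum G ≤ 2 := by
    intro h
    have hmem : 1 ∈ {n | ∃ A : Finset (Sym2 V), ↑A ⊆ G.edgeSet ∧ A.card = n ∧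
        domNum (G.deleteEdges ↑A) = domNum G + 1} := by
      refine ⟨{s(u,v)}, ?_, Finset.card_singleton _, ?_⟩
      · intro e he
        simp only [Finset.coe_singleton, Set.mem_singleton_iff] at he
        rw [he]
        exact huv
      · have hco : (↑({s(u,v)} : Finset (Sym2 V)) : Set (Sym2 V)) = {s(u,v)} := by simp
        rw [hco]
        exact h
    exact le_trans (Nat.sInf_le hmem) one_le_two
  have hpend := pend_le huv leaf_v
  rcases hcase with ⟨v2, hv2, huv2, leaf_v2⟩ | ⟨w, hwv, huw, hnbr⟩ | leaf_u
  · exact key1 (le_antisymm hpend (TL_ge huv leaf_v hv2 huv2 leaf_v2))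
  · by_cases hc : domNum G + 1 ≤ domNum (G.deleteEdges {s(u,v)})
    · exact key1 (le_antisymm hpend hc)
    · have hmono : domNum G ≤ domNum (G.deleteEdges {s(u,v)}) :=
        domNum_mono (G.deleteEdges_le _)
      have heq : domNum (G.deleteEdges {s(u,v)}) = domNum G := by omega
      have hne : s(u,v) ≠ s(u,w) := by
        rw [Ne, Sym2.eq_iff]
        rintro (⟨h1, h2⟩ | ⟨h1, h2⟩)
        · exact hwv h2.symm
        · exact huw.ne h1
      have hA : ({s(u,v), s(u,w)} : Finset (Sym2 V)).card = 2 := by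
        rw [Finset.card_insert_of_notMem (by simpa using hne), Finset.card_singleton]
      have hmem : 2 ∈ {n | ∃ A : Finset (Sym2 V), ↑A ⊆ G.edgeSet ∧ A.card = n ∧
          domNum (G.deleteEdges ↑A) = domNum G + 1} := by
        refine ⟨{s(u,v), s(u,w)}, ?_, hA, ?_⟩
        · intro e he
          simp only [Finset.coe_insert, Finset.coe_singleton, Set.mem_insert_iff,
            Set.mem_singleton_iff] at he
          rcases he with h | h <;> rw [h]
          · exact huv
          · exact huw
        · have hco : (↑({s(u,v), s(u,w)} : Finset (Sym2 V)) : Set (Sym2 V))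
              = {s(u,v), s(u,w)} := by simp
          rw [hco]
          exact le_antisymm (TN_le huv leaf_v hwv huw hnbr heq)
            (TN_ge huv leaf_v hwv huw hnbr)
      exact Nat.sInf_le hmem
  · exact key1 (le_antisymm hpend (SE_ge huv leaf_v leaf_u))
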